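/- Let v be a non-empty antipalindromic prefix (v = w_n, n ≥ 1) of a pseudostandard sequence starting with 0, i.e., w_0 = ε and w_{k+1} = (w_k δ_{k+1})^E for letters δ_k with δ_1 = 0. For a ∈ {0,1}, let e_a be the maximal length of an antipalindromic prefix q of v with qa a prefix of v (setting e_a = e_{\overline a} if no such q exists). Then Γ = {e_0, e_1, |v| - e_1 - 1} is a string attractor of v. -/

import Mathlib

def occursAt (f w : List Bool) (i : ℕ) : Prop :=
  i + f.length ≤ w.length ∧ (w.drop i).take f.length = f

def IsAttractor (w : List Bool) (Γ : Finset ℕ) : Prop :=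
  (∀ γ ∈ Γ, γ < w.length) ∧
  ∀ f : List Bool, f ≠ [] → f <:+: w →
    ∃ i, occursAt f w i ∧ ∃ γ ∈ Γ, i ≤ γ ∧ γ < i + f.length

def Emap (w : List Bool) : List Bool := (w.reverse).map (fun b => !b)

def IsPal (w : List Bool) : Prop := w.reverse = w

def IsAntipal (w : List Bool) : Prop := Emap w = w

def IsPalClosure (w p : List Bool) : Prop :=
  IsPal p ∧ w <+: p ∧ ∀ q, IsPal q → w <+: q → p.length ≤ q.length

def IsAntipalClosure (w p : List Bool) : Prop :=
  IsAntipal p ∧ w <+: p ∧ ∀ q, IsAntipal q → w <+: q → p.length ≤ q.length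

/-!
Induction on `n`, writing `v = wₙ` and `x = v δₙ₊₁`. As `v` is antipalindromic, the nonempty
antipalindromic suffixes of `x` are the words `δ̄ q δ` with `q` antipalindromic and `q δ` a prefix of
`v`. As `|x^E|` is `2|x|` minus the length of the longest antipalindromic suffix of `x`, this gives
`|x^E| = 2|v| - e_δ`, and in `x^E` the new `e_δ` is `|v|` while `e_δ̄` is unchanged.
Since `v` is both a prefix and a suffix of `x^E`, which has length at most `2|v| + 1`, a factor of
`x^E` either covers position `|v|` or is a factor of `v`; an occurrence in `v` covering the old
attractor, placed in the prefix or in the suffix copy of `v`, covers the new one. The exception is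
the regime `δ₁ = ⋯ = δₙ = 0`: there `v = (01)ⁿ`, no `q 1` is a prefix, and the closure of `v 1` is
`(01)ⁿ 10 (01)ⁿ`; these words are handled directly.
-/

@[simp] lemma length_Emap (w : List Bool) : (Emap w).length = w.length := by simp [Emap]

lemma Emap_append (x y : List Bool) : Emap (x ++ y) = Emap y ++ Emap x := by simp [Emap]

@[simp] lemma Emap_Emap (w : List Bool) : Emap (Emap w) = w := by simp [Emap, Function.comp_def]

@[simp] lemma Emap_singleton (a : Bool) : Emap [a] = [!a] := rfl

lemma getElem_Emap (w : List Bool) (i : ℕ) (h : i < (Emap w).length) :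
    (Emap w)[i] = !(w[w.length - 1 - i]'(by simp at h; omega)) := by
  simp [Emap, List.getElem_reverse]

lemma IsAntipal.nil : IsAntipal [] := rfl

lemma IsAntipal.getElem_eq_not {w : List Bool} (hw : IsAntipal w) {i j : ℕ} (hi : i < w.length)
    (hj : j < w.length) (hij : i + j + 1 = w.length) : w[i] = !w[j] := by
  rw [List.getElem_of_eq hw.symm hi, getElem_Emap]
  simp only [show w.length - 1 - i = j by omega]

lemma IsAntipal.length_even {w : List Bool} (hw : IsAntipal w) : w.length % 2 = 0 := by
  by_contra hodd
  have := hw.getElem_eq_not (i := w.length / 2) (j := w.length / 2) (by omega) (by omega) (by omega)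
  simp at this

lemma IsAntipal.Emap_suffix {w u : List Bool} (hw : IsAntipal w) (h : u <+: w) : Emap u <:+ w := by
  obtain ⟨t, rfl⟩ := h
  exact ⟨Emap t, by rw [← Emap_append, hw]⟩

lemma isAntipal_sandwich_iff {a b : Bool} {y : List Bool} :
    IsAntipal ([a] ++ y ++ [b]) ↔ a = !b ∧ IsAntipal y := by
  unfold IsAntipal
  rw [Emap_append, Emap_append, Emap_singleton, Emap_singleton]
  constructor
  · intro h
    obtain ⟨hb, h⟩ := List.append_inj (h.trans (List.append_assoc ..)) rfl
    obtain ⟨hy, -⟩ := List.append_inj h (by simp)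
    simp only [List.cons.injEq, and_true] at hb
    exact ⟨hb.symm, hy⟩
  · rintro ⟨rfl, hy⟩
    simp [hy]

lemma IsAntipal.drop_of_append {x r : List Bool} (h : IsAntipal (x ++ r))
    (hr : r.length ≤ x.length) : IsAntipal (x.drop r.length) := by
  unfold IsAntipal at h
  rw [← List.take_append_drop r.length x, Emap_append, Emap_append, List.append_assoc] at h
  obtain ⟨-, h⟩ := List.append_inj h (by simp; omega)
  exact (List.append_inj h (by simp)).1

lemma IsAntipal.eq_drop_Emap {x r : List Bool} (h : IsAntipal (x ++ r))
    (hr : r.length ≤ x.length) : r = (Emap x).drop (x.length - r.length) := by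
  have := congrArg (List.drop x.length) h
  rw [Emap_append, List.drop_append, List.drop_eq_nil_of_le (by simpa using hr),
    List.drop_left, length_Emap, List.nil_append] at this
  exact this.symm

lemma IsAntipal.eq_of_prefix {x p p' : List Bool} (hp : IsAntipal p) (hp' : IsAntipal p')
    (hx : x <+: p) (hx' : x <+: p') (hlen : p.length = p'.length) (hle : p.length ≤ 2 * x.length) :
    p = p' := by
  obtain ⟨r, rfl⟩ := hx
  obtain ⟨r', rfl⟩ := hx'
  simp only [List.length_append] at hlen hle
  rw [hp.eq_drop_Emap (by omega), hp'.eq_drop_Emap (by omega), show r.length = r'.length by omega]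

lemma occursAt_iff_getElem {f w : List Bool} {i : ℕ} :
    occursAt f w i ↔ ∃ h : i + f.length ≤ w.length, ∀ j (hj : j < f.length), w[i + j] = f[j] := by
  unfold occursAt
  constructor
  · rintro ⟨h, hf⟩
    refine ⟨h, fun j hj => ?_⟩
    rw [List.getElem_of_eq hf.symm hj, List.getElem_take, List.getElem_drop]
  · rintro ⟨h, hf⟩
    exact ⟨h, List.ext_getElem (by simp; omega) fun j _ hj => by simp [hf j hj]⟩

lemma occursAt_append_of_le {f x y : List Bool} {i : ℕ} (h : i + f.length ≤ x.length) :
    occursAt f (x ++ y) i ↔ occursAt f x i := by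
  unfold occursAt
  rw [List.drop_append_of_le_length (by omega), List.take_append_of_le_length (by simp; omega)]
  exact and_congr_left fun _ => iff_of_true (by simp; omega) h

lemma occursAt_append_add {f x y : List Bool} {i : ℕ} :
    occursAt f (x ++ y) (x.length + i) ↔ occursAt f y i := by
  unfold occursAt
  rw [List.drop_append, List.drop_eq_nil_of_le (by omega), Nat.add_sub_cancel_left,
    List.length_append, Nat.add_assoc, Nat.add_le_add_iff_left, List.nil_append]

lemma exists_occursAt_of_infix {f w : List Bool} (h : f <:+: w) : ∃ i, occursAt f w i := by
  obtain ⟨s, t, rfl⟩ := h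
  refine ⟨s.length, ?_⟩
  rw [List.append_assoc, ← Nat.add_zero s.length, occursAt_append_add,
    occursAt_append_of_le (by simp)]
  simp [occursAt]

lemma occursAt.isInfix {f w : List Bool} {i : ℕ} (h : occursAt f w i) : f <:+: w := by
  rw [← h.2]
  exact ((w.drop i).take_prefix f.length).isInfix.trans (w.drop_suffix i).isInfix

lemma occursAt.isInfix_of_prefix_of_suffix {f v W : List Bool} {i : ℕ} (h : occursAt f W i)
    (hp : v <+: W) (hs : v <:+ W) (hi : i + f.length ≤ v.length ∨ W.length ≤ i + v.length) :
    f <:+: v := by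
  rcases hi with hi | hi
  · obtain ⟨r, rfl⟩ := hp
    exact ((occursAt_append_of_le hi).1 h).isInfix
  · obtain ⟨u, rfl⟩ := hs
    have hu : u.length ≤ i := by simp at hi; omega
    rw [← Nat.add_sub_cancel' hu, occursAt_append_add] at h
    exact h.isInfix

lemma IsAttractor.of_prefix_of_suffix {v W : List Bool} {Γ Γ' : Finset ℕ} (hA : IsAttractor v Γ)
    (hp : v <+: W) (hs : v <:+ W) (hW : W.length ≤ 2 * v.length + 1) (hv : v.length ∈ Γ')
    (hΓ : ∀ γ ∈ Γ, γ ∈ Γ' ∨ γ + (W.length - v.length) ∈ Γ') (hΓ' : ∀ γ ∈ Γ', γ < W.length) :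
    IsAttractor W Γ' := by
  refine ⟨hΓ', fun f hf hfW => ?_⟩
  obtain ⟨i, hi⟩ := exists_occursAt_of_infix hfW
  by_cases hcross : i ≤ v.length ∧ v.length < i + f.length
  · exact ⟨i, hi, v.length, hv, hcross⟩
  obtain ⟨j, hj, γ, hγ, hjγ⟩ :=
    hA.2 f hf (hi.isInfix_of_prefix_of_suffix hp hs (by have := hi.1; omega))
  rcases hΓ γ hγ with hγ' | hγ'
  · obtain ⟨r, rfl⟩ := hp
    exact ⟨j, (occursAt_append_of_le hj.1).2 hj, γ, hγ', hjγ⟩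
  · obtain ⟨u, rfl⟩ := hs
    refine ⟨u.length + j, occursAt_append_add.2 hj, _, hγ', ?_⟩
    simp only [List.length_append, Nat.add_sub_cancel]
    omega

def altWord (n : ℕ) : List Bool := (List.range (2 * n)).map fun i => decide (i % 2 = 1)

@[simp] lemma length_altWord (n : ℕ) : (altWord n).length = 2 * n := by simp [altWord]

@[simp] lemma getElem_altWord {n i : ℕ} (h : i < (altWord n).length) :
    (altWord n)[i] = decide (i % 2 = 1) := by simp [altWord]

lemma altWord_succ (n : ℕ) : altWord (n + 1) = altWord n ++ [false, true] := by
  simp [altWord, Nat.mul_succ, List.range_succ]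

lemma isAntipal_altWord (n : ℕ) : IsAntipal (altWord n) :=
  List.ext_getElem (by simp) fun i h _ => by
    rw [getElem_Emap, getElem_altWord, getElem_altWord]
    simp only [length_Emap, length_altWord] at h
    by_cases hi : i % 2 = 1 <;> simp [hi] <;> omega

lemma occursAt_altWord_iff {f : List Bool} {n i : ℕ} :
    occursAt f (altWord n) i ↔
      i + f.length ≤ 2 * n ∧ ∀ j (hj : j < f.length), f[j] = decide ((i + j) % 2 = 1) := by
  simp only [occursAt_iff_getElem, getElem_altWord, length_altWord, exists_prop]
  exact and_congr_right fun _ => forall₂_congr fun _ _ => eq_comm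

lemma IsAntipal.not_append_true_prefix_altWord {q : List Bool} (hq : IsAntipal q) (n : ℕ) :
    ¬ q ++ [true] <+: altWord n := by
  intro h
  have hlen := h.length_le
  simp only [List.length_append, List.length_singleton, length_altWord] at hlen
  have := h.getElem (i := q.length) (by simp)
  simp only [List.getElem_append_right (le_refl _), Nat.sub_self, List.getElem_singleton,
    getElem_altWord] at this
  have := hq.length_even
  simp_all

lemma exists_occursAt_altWord_cover {f : List Bool} {n : ℕ} (hf : f ≠ []) (hft : f ≠ [true])
    (h : f <:+: altWord n) :
    ∃ i, occursAt f (altWord n) i ∧ i ≤ 2 * n - 2 ∧ 2 * n - 2 < i + f.length := by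
  obtain ⟨i, hi⟩ := exists_occursAt_of_infix h
  obtain ⟨hle, hfi⟩ := occursAt_altWord_iff.1 hi
  have hpos : 0 < f.length := List.length_pos_iff.2 hf
  -- slide the occurrence to the right end, keeping the parity of its start
  obtain ⟨i', hend, hpar⟩ : ∃ i', (i' + f.length = 2 * n ∨ i' + f.length + 1 = 2 * n) ∧
      i' % 2 = i % 2 := by
    by_cases heven : (i + f.length) % 2 = 0
    · exact ⟨2 * n - f.length, Or.inl (by omega), by omega⟩
    · exact ⟨2 * n - f.length - 1, Or.inr (by omega), by omega⟩
  have hfi' : ∀ j (hj : j < f.length), f[j] = decide ((i' + j) % 2 = 1) := fun j hj => by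
    rw [hfi j hj, decide_eq_decide]
    omega
  refine ⟨i', occursAt_altWord_iff.2 ⟨by omega, hfi'⟩, ?_, by omega⟩
  by_contra hlate
  have hone : f.length = 1 := by omega
  exact hft (List.ext_getElem (by simpa using hone) fun j hj _ => by
    rw [hfi' j hj]
    simp only [List.getElem_singleton, decide_eq_true_eq]
    omega)

lemma isAttractor_altWord {n : ℕ} (hn : 1 ≤ n) : IsAttractor (altWord n) {2 * n - 2, 1} := by
  refine ⟨by simp only [Finset.mem_insert, Finset.mem_singleton, length_altWord]; omega,
    fun f hf hfw => ?_⟩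
  by_cases hft : f = [true]
  · subst hft
    exact ⟨1, occursAt_altWord_iff.2 ⟨by simp; omega, by simp⟩, 1, by simp, by simp⟩
  · obtain ⟨i, hi, hcover⟩ := exists_occursAt_altWord_cover hf hft hfw
    exact ⟨i, hi, _, by simp, hcover⟩

lemma isAttractor_altWord_append_altWord (n : ℕ) :
    IsAttractor (altWord n ++ [true, false] ++ altWord n) {2 * n - 2, 2 * n, 2 * n + 1} := by
  have hlen : (altWord n ++ [true, false] ++ altWord n).length = 4 * n + 2 := by simp; omega
  rw [List.append_assoc] at hlen ⊢
  refine ⟨by simp only [Finset.mem_insert, Finset.mem_singleton, hlen]; omega,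
    fun f hf hfW => ?_⟩
  obtain ⟨i, hi⟩ := exists_occursAt_of_infix hfW
  by_cases h₁ : i ≤ 2 * n ∧ 2 * n < i + f.length
  · exact ⟨i, hi, 2 * n, by simp, h₁⟩
  by_cases h₂ : i ≤ 2 * n + 1 ∧ 2 * n + 1 < i + f.length
  · exact ⟨i, hi, 2 * n + 1, by simp, h₂⟩
  have hfv : f <:+: altWord n :=
    hi.isInfix_of_prefix_of_suffix (List.prefix_append _ _)
      (by rw [← List.append_assoc]; exact List.suffix_append _ _)
      (by have := List.length_pos_iff.2 hf; simp only [hlen, length_altWord]; omega)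
  by_cases hft : f = [true]
  · subst hft
    refine ⟨2 * n, ?_, 2 * n, by simp, by simp⟩
    rw [← Nat.add_zero (2 * n), ← length_altWord n, occursAt_append_add]
    simp [occursAt]
  · obtain ⟨j, hj, hcover⟩ := exists_occursAt_altWord_cover hf hft hfv
    exact ⟨j, (occursAt_append_of_le (by simpa using hj.1)).2 hj, _, by simp, hcover⟩

lemma IsAntipal.exists_of_suffix_append_singleton {v u : List Bool} {d : Bool}
    (hv : IsAntipal v) (hu : IsAntipal u) (hne : u ≠ []) (hsuf : u <:+ v ++ [d]) :
    ∃ y, IsAntipal y ∧ y ++ [d] <+: v ∧ y.length + 2 = u.length := by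
  have hpre : u <+: (!d) :: v := by
    obtain ⟨t, ht⟩ := hsuf
    refine ⟨Emap t, ?_⟩
    have := congrArg Emap ht
    rwa [Emap_append, Emap_append, hu, hv] at this
  obtain ⟨t, rfl, ht⟩ := (List.prefix_cons_iff.1 hpre).resolve_left hne
  obtain ⟨y, c, rfl⟩ : ∃ y c, t = y ++ [c] := by
    rcases List.eq_nil_or_concat t with rfl | ⟨y, c, rfl⟩
    · exact absurd hu.length_even (by simp)
    · exact ⟨y, c, List.concat_eq_append ..⟩
  obtain ⟨hdc, hy⟩ := isAntipal_sandwich_iff.1 (show IsAntipal ([!d] ++ y ++ [c]) from hu)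
  rw [← Bool.not_inj hdc] at ht
  exact ⟨y, hy, ht, by simp⟩

lemma IsAntipalClosure.length_add_length_le {x p s : List Bool} (hc : IsAntipalClosure x p)
    (hs : IsAntipal s) (hsx : s <:+ x) : p.length + s.length ≤ 2 * x.length := by
  obtain ⟨t, rfl⟩ := hsx
  have hext : IsAntipal (t ++ s ++ Emap t) := by
    unfold IsAntipal at hs ⊢
    simp only [Emap_append, Emap_Emap, hs, List.append_assoc]
  have := hc.2.2 _ hext (List.prefix_append _ _)
  simp only [List.length_append, length_Emap] at this ⊢
  omega

def IsMaxAntipalPrefix (v : List Bool) (a : Bool) (g : ℕ) : Prop :=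
  (∃ q, IsAntipal q ∧ q ++ [a] <+: v ∧ q.length = g) ∧
    ∀ q, IsAntipal q → q ++ [a] <+: v → q.length ≤ g

lemma IsMaxAntipalPrefix.unique {v : List Bool} {a : Bool} {g g' : ℕ}
    (h : IsMaxAntipalPrefix v a g) (h' : IsMaxAntipalPrefix v a g') : g = g' := by
  obtain ⟨⟨q, hq, hqv, rfl⟩, hmax⟩ := h
  obtain ⟨⟨q', hq', hqv', rfl⟩, hmax'⟩ := h'
  exact le_antisymm (hmax' q hq hqv) (hmax q' hq' hqv')

lemma IsMaxAntipalPrefix.lt_length {v : List Bool} {a : Bool} {g : ℕ}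
    (h : IsMaxAntipalPrefix v a g) : g < v.length := by
  obtain ⟨⟨q, -, hqv, rfl⟩, -⟩ := h
  simpa using hqv.length_le

lemma IsAntipalClosure.length_lt_of_prefix {x p r : List Bool} (hc : IsAntipalClosure x p)
    (hr : IsAntipal r) (hrp : r <+: p) (hlt : r.length < p.length) : r.length < x.length := by
  by_contra! hle
  have := hc.2.2 r hr (List.prefix_of_prefix_length_le hc.2.1 hrp hle)
  omega

section Closure

variable {v p : List Bool} {d : Bool}

lemma IsAntipalClosure.prefix (hc : IsAntipalClosure (v ++ [d]) p) : v <+: p :=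
  (List.prefix_append v [d]).trans hc.2.1

lemma IsAntipalClosure.suffix (hv : IsAntipal v) (hc : IsAntipalClosure (v ++ [d]) p) :
    v <:+ p := by
  have := hc.1.Emap_suffix hc.2.1
  rw [Emap_append, hv] at this
  exact (List.suffix_append _ _).trans this

lemma IsAntipalClosure.exists_of_length_lt (hv : IsAntipal v)
    (hc : IsAntipalClosure (v ++ [d]) p) (hlt : p.length < 2 * (v.length + 1)) :
    ∃ y, IsAntipal y ∧ y ++ [d] <+: v ∧ y.length + p.length = 2 * v.length := by
  obtain ⟨r, hr⟩ := hc.2.1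
  have hpr : p.length = v.length + 1 + r.length := by simp [← hr]; omega
  have hrx : r.length < (v ++ [d]).length := by simp; omega
  have hu := (show IsAntipal (v ++ [d] ++ r) from hr ▸ hc.1).drop_of_append hrx.le
  obtain ⟨y, hy, hyv, hylen⟩ := hv.exists_of_suffix_append_singleton hu
    (by simpa using hrx) (List.drop_suffix _ _)
  refine ⟨y, hy, hyv, ?_⟩
  simp only [List.length_drop, List.length_append, List.length_singleton] at hylen
  omega

lemma IsAntipalClosure.length_add_eq (hv : IsAntipal v) (hc : IsAntipalClosure (v ++ [d]) p)
    {g : ℕ} (hg : IsMaxAntipalPrefix v d g) : p.length + g = 2 * v.length := by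
  obtain ⟨⟨q, hq, hqv, rfl⟩, hmax⟩ := hg
  have hsuf : [!d] ++ q ++ [d] <:+ v ++ [d] := by
    refine List.suffix_append_self_iff.2 ?_
    have := hv.Emap_suffix hqv
    rwa [Emap_append, hq, Emap_singleton] at this
  have hle := hc.length_add_length_le (isAntipal_sandwich_iff.2 ⟨rfl, hq⟩) hsuf
  simp only [List.length_append, List.length_singleton] at hle
  by_contra hne
  obtain ⟨y, hy, hyv, hylen⟩ := hc.exists_of_length_lt hv (by omega)
  have := hmax y hy hyv
  omega

lemma IsAntipalClosure.length_eq_of_not_exists (hv : IsAntipal v)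
    (hc : IsAntipalClosure (v ++ [d]) p) (hno : ¬ ∃ q, IsAntipal q ∧ q ++ [d] <+: v) :
    p.length = 2 * v.length + 2 := by
  have hle := hc.length_add_length_le IsAntipal.nil List.nil_suffix
  simp only [List.length_append, List.length_singleton, List.length_nil] at hle
  by_contra hne
  obtain ⟨y, hy, hyv, -⟩ := hc.exists_of_length_lt hv (by omega)
  exact hno ⟨y, hy, hyv⟩

lemma IsAntipalClosure.append_singleton_prefix_iff (hc : IsAntipalClosure (v ++ [d]) p)
    {q : List Bool} (hq : IsAntipal q) {a : Bool} :
    q ++ [a] <+: p ↔ q ++ [a] <+: v ∨ (q = v ∧ a = d) := by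
  constructor
  · intro hqp
    have hlt := hc.length_lt_of_prefix hq ((List.prefix_append q [a]).trans hqp)
      (by simpa using hqp.length_le)
    simp only [List.length_append, List.length_singleton] at hlt
    rcases Nat.lt_or_ge q.length v.length with hqv | hqv
    · exact Or.inl (List.prefix_of_prefix_length_le hqp hc.prefix (by simp; omega))
    · have := (List.prefix_of_prefix_length_le hqp hc.2.1 (by simp; omega)).eq_of_length
        (by simp; omega)
      obtain ⟨rfl, h⟩ := List.append_inj' this rfl
      exact Or.inr ⟨rfl, List.singleton_injective h⟩
  · rintro (h | ⟨rfl, rfl⟩)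
    · exact h.trans hc.prefix
    · exact hc.2.1

lemma IsAntipalClosure.isMaxAntipalPrefix_self (hv : IsAntipal v)
    (hc : IsAntipalClosure (v ++ [d]) p) : IsMaxAntipalPrefix p d v.length := by
  refine ⟨⟨v, hv, hc.2.1, rfl⟩, fun q hq hqp => ?_⟩
  rcases (hc.append_singleton_prefix_iff hq).1 hqp with h | ⟨rfl, -⟩
  · have := h.length_le
    simp only [List.length_append, List.length_singleton] at this
    omega
  · exact le_rfl

lemma IsMaxAntipalPrefix.closure_of_ne {a : Bool} {g : ℕ} (h : IsMaxAntipalPrefix v a g)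
    (hc : IsAntipalClosure (v ++ [d]) p) (had : a ≠ d) : IsMaxAntipalPrefix p a g := by
  obtain ⟨⟨q, hq, hqv, hqg⟩, hmax⟩ := h
  refine ⟨⟨q, hq, hqv.trans hc.prefix, hqg⟩, fun q' hq' hq'p => ?_⟩
  rcases (hc.append_singleton_prefix_iff hq').1 hq'p with h | ⟨-, rfl⟩
  · exact hmax q' hq' h
  · exact absurd rfl had

end Closure

-- The second alternative of `max_true` is the regime `δ₁ = ⋯ = δₙ = 0`, where no antipalindromic
-- prefix is followed by `1` and `v = (01)ⁿ`.
structure AttractorInvariant (v : List Bool) (n g₀ g₁ : ℕ) : Prop where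
  isAntipal : IsAntipal v
  max_false : IsMaxAntipalPrefix v false g₀
  max_true : IsMaxAntipalPrefix v true g₁ ∨ (v = altWord n ∧ g₁ = g₀ ∧ g₀ + 2 = 2 * n)
  isAttractor : IsAttractor v {g₀, g₁, v.length - g₁ - 1}

lemma attractorInvariant_one {p : List Bool} (hc : IsAntipalClosure [false] p) :
    AttractorInvariant p 1 0 0 := by
  have hlen := hc.length_eq_of_not_exists (v := []) IsAntipal.nil (by simp)
  have hp : p = altWord 1 :=
    hc.1.eq_of_prefix (isAntipal_altWord 1) hc.2.1 ⟨[true], rfl⟩ (by simpa using hlen)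
      (by simp [hlen])
  subst hp
  refine ⟨hc.1, hc.isMaxAntipalPrefix_self (v := []) IsAntipal.nil, Or.inr ⟨rfl, rfl, rfl⟩, ?_⟩
  simpa using isAttractor_altWord le_rfl

section Step

variable {v p : List Bool} {n g₀ g₁ : ℕ}

lemma AttractorInvariant.closure_false (I : AttractorInvariant v n g₀ g₁)
    (hc : IsAntipalClosure (v ++ [false]) p) : ∃ g₀' g₁', AttractorInvariant p (n + 1) g₀' g₁' := by
  have hlen := hc.length_add_eq I.isAntipal I.max_false
  have hg₀ := I.max_false.lt_length
  rcases I.max_true with h₁ | ⟨rfl, -, hn⟩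
  · have hg₁ := h₁.lt_length
    refine ⟨v.length, g₁, hc.1, hc.isMaxAntipalPrefix_self I.isAntipal,
      Or.inl (h₁.closure_of_ne hc (by decide)), ?_⟩
    refine I.isAttractor.of_prefix_of_suffix hc.prefix (hc.suffix I.isAntipal) (by omega)
      (by simp) ?_ ?_ <;>
    · intro γ hγ
      simp only [Finset.mem_insert, Finset.mem_singleton] at hγ ⊢
      omega
  · simp only [length_altWord] at hlen
    have hp : p = altWord (n + 1) :=
      hc.1.eq_of_prefix (isAntipal_altWord (n + 1)) hc.2.1 (by simp [altWord_succ])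
        (by simp; omega) (by simp; omega)
    subst hp
    refine ⟨2 * n, 2 * n, hc.1, by simpa using hc.isMaxAntipalPrefix_self (isAntipal_altWord n),
      Or.inr ⟨rfl, rfl, by omega⟩, ?_⟩
    convert isAttractor_altWord (n := n + 1) (by omega) using 1
    simp only [length_altWord, show 2 * (n + 1) - 2 * n - 1 = 1 by omega,
      show 2 * (n + 1) - 2 = 2 * n by omega, Finset.insert_idem]

lemma AttractorInvariant.closure_true (I : AttractorInvariant v n g₀ g₁)
    (hc : IsAntipalClosure (v ++ [true]) p) : ∃ g₀' g₁', AttractorInvariant p (n + 1) g₀' g₁' := by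
  have hg₀ := I.max_false.lt_length
  rcases I.max_true with h₁ | ⟨rfl, -, hn⟩
  · have hlen := hc.length_add_eq I.isAntipal h₁
    have hg₁ := h₁.lt_length
    refine ⟨g₀, v.length, hc.1, I.max_false.closure_of_ne hc (by decide),
      Or.inl (hc.isMaxAntipalPrefix_self I.isAntipal), ?_⟩
    refine I.isAttractor.of_prefix_of_suffix hc.prefix (hc.suffix I.isAntipal) (by omega)
      (by simp) ?_ ?_ <;>
    · intro γ hγ
      simp only [Finset.mem_insert, Finset.mem_singleton] at hγ ⊢
      omega
  · have hlen := hc.length_eq_of_not_exists I.isAntipal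
      fun ⟨q, hq, hqv⟩ => hq.not_append_true_prefix_altWord n hqv
    have hp : p = altWord n ++ [true, false] ++ altWord n := by
      obtain ⟨r, rfl⟩ := hc.2.1
      simp only [List.length_append, List.length_singleton, length_altWord] at hlen
      have hr : (altWord n ++ [true]).length - r.length = 0 := by simp; omega
      rw [hc.1.eq_drop_Emap (by simp; omega), hr, List.drop_zero, Emap_append, isAntipal_altWord]
      simp
    subst hp
    refine ⟨g₀, 2 * n, hc.1, I.max_false.closure_of_ne hc (by decide),
      Or.inl (by simpa using hc.isMaxAntipalPrefix_self I.isAntipal), ?_⟩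
    convert isAttractor_altWord_append_altWord n using 2
    · omega
    · simp

end Step

lemma exists_attractorInvariant {δ : ℕ → Bool} (hδ1 : δ 1 = false) {w : ℕ → List Bool}
    (h0 : w 0 = []) (hclos : ∀ k, IsAntipalClosure (w k ++ [δ (k + 1)]) (w (k + 1)))
    {n : ℕ} (hn : 1 ≤ n) : ∃ g₀ g₁, AttractorInvariant (w n) n g₀ g₁ := by
  induction n, hn using Nat.le_induction with
  | base =>
    have hc := hclos 0
    rw [h0, hδ1] at hc
    exact ⟨0, 0, attractorInvariant_one hc⟩
  | succ n _ ih =>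
    obtain ⟨g₀, g₁, I⟩ := ih
    have hc := hclos n
    cases hd : δ (n + 1)
    · exact I.closure_false (hd ▸ hc)
    · exact I.closure_true (hd ▸ hc)

theorem stmt_14 (δ : ℕ → Bool) (hδ1 : δ 1 = false)
    (w : ℕ → List Bool) (h0 : w 0 = [])
    (hclos : ∀ k, IsAntipalClosure (w k ++ [δ (k + 1)]) (w (k + 1)))
    (n : ℕ) (hn : 1 ≤ n)
    (v : List Bool) (hv : v = w n)
    (e : Bool → ℕ)
    (he : ∀ a : Bool,
      ((∃ q, IsAntipal q ∧ (q ++ [a]) <+: v ∧ q.length = e a) ∧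
        (∀ q, IsAntipal q → (q ++ [a]) <+: v → q.length ≤ e a)) ∨
      ((¬ ∃ q, IsAntipal q ∧ (q ++ [a]) <+: v) ∧ e a = e (!a))) :
    IsAttractor v ({e false, e true, v.length - e true - 1} : Finset ℕ) := by
  subst hv
  obtain ⟨g₀, g₁, I⟩ := exists_attractorInvariant hδ1 h0 hclos hn
  have he₀ : e false = g₀ := by
    rcases he false with h | ⟨hno, -⟩
    · exact IsMaxAntipalPrefix.unique h I.max_false
    · exact absurd (I.max_false.1.imp fun q ⟨hq, hqv, _⟩ => ⟨hq, hqv⟩) hno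
  have he₁ : e true = g₁ := by
    rcases I.max_true with h₁ | ⟨hv, rfl, -⟩
    · rcases he true with h | ⟨hno, -⟩
      · exact IsMaxAntipalPrefix.unique h h₁
      · exact absurd (h₁.1.imp fun q ⟨hq, hqv, _⟩ => ⟨hq, hqv⟩) hno
    · rcases he true with h | ⟨-, h⟩
      · obtain ⟨q, hq, hqv, -⟩ := h.1
        exact absurd (hv ▸ hqv) (hq.not_append_true_prefix_altWord n)
      · exact h.trans he₀
  rw [he₀, he₁]
  exact I.isAttractor
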